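/- arXiv:1204.0540 — 3 statements merged into one kernel-verified Lean document; each statement's English description precedes it below -/
import Mathlib

section
/- Let c ≥ 0 and let f : ℝ × ℕ → ℝ be such that for every ℓ ≥ 1 the map x ↦ f(x,ℓ) is twice continuously differentiable on a neighborhood of [0,1], and suppose there is a constant C such that |f(x,ℓ)| ≤ C, |∂_x f(x,ℓ)| ≤ C and |∂_{xx} f(x,ℓ)| ≤ C for all x ∈ [0,1] and all ℓ ≥ 1. Define the kernel action K̂f(x) = Σ_{ℓ=1}^∞ (1-x)^{ℓ-1} x f(x,ℓ) and the operator Ĝf(x,ℓ) = (c/2) x(1-x) ∂_{xx} f(x,ℓ) + c[(1-x) - (ℓ-1)x] ∂_x f(x,ℓ) + c (ℓ(ℓ-1)/2) (f(x,ℓ+1) - f(x,ℓ)). Then for every x ∈ (0,1) the function K̂f is twice differentiable at x and the intertwining relation Σ_{ℓ=1}^∞ (1-x)^{ℓ-1} x Ĝf(x,ℓ) = (c/2) x(1-x) (K̂f)''(x) holds; that is, K̂Ĝf(x) = G K̂f(x) where G g(x) = (c/2) x(1-x) g''(x) is the Wright–Fisher generator. -/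
/-!
The `n`-th term `(1 - x) ^ n * x * f (n + 1) x` of `K̂f` and its first two derivatives are bounded
on `[a, 1]`, `0 < a`, by multiples of `(n + 1) ^ 2 * (1 - a) ^ (n - 2)`, so `K̂f` may be
differentiated twice term by term on `(a, 1)`. Termwise, `(c/2) x (1 - x)` times the second
derivative of the `n`-th term is `K̂(x, n + 1) Ĝf(x, n + 1)` minus the difference of the jump
fluxes `c ℓ (ℓ - 1) / 2 · K̂(x, ℓ) f(x, ℓ + 1)` at `ℓ = n + 1` and `ℓ = n`, and these differences
telescope to zero in the sum.
-/

open MeasureTheory Set Filter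

/-- The kernel action `K̂f(x) = Σ_{ℓ=1}^∞ (1-x)^{ℓ-1} x f(x,ℓ)`, where `f ℓ x = f(x,ℓ)`. -/
noncomputable def hatK (f : ℕ → ℝ → ℝ) (x : ℝ) : ℝ :=
  ∑' ℓ : ℕ, (1 - x) ^ ℓ * x * f (ℓ + 1) x

/-- The operator `Ĝf(x,ℓ) = (c/2) x(1-x) ∂ₓₓ f(x,ℓ) + c[(1-x)-(ℓ-1)x] ∂ₓ f(x,ℓ)
    + c (ℓ(ℓ-1)/2)(f(x,ℓ+1) - f(x,ℓ))`. -/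
noncomputable def hatG (c : ℝ) (f : ℕ → ℝ → ℝ) (x : ℝ) (ℓ : ℕ) : ℝ :=
  c / 2 * (x * (1 - x)) * deriv (deriv (f ℓ)) x
    + c * ((1 - x) - ((ℓ : ℝ) - 1) * x) * deriv (f ℓ) x
    + c * ((ℓ : ℝ) * ((ℓ : ℝ) - 1) / 2) * (f (ℓ + 1) x - f ℓ x)

theorem Summable.hasSum_succ_sub {α : Type*} [AddCommGroup α] [TopologicalSpace α]
    [IsTopologicalAddGroup α] [T2Space α] {ψ : ℕ → α} (hψ : Summable ψ) :
    HasSum (fun n => ψ (n + 1) - ψ n) (-ψ 0) := by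
  convert ((summable_nat_add_iff 1).mpr hψ).hasSum.sub hψ.hasSum using 1
  rw [hψ.tsum_eq_zero_add]
  abel

theorem ContDiffOn.differentiableAt_deriv_of_isOpen {𝕜 E : Type*} [NontriviallyNormedField 𝕜]
    [NormedAddCommGroup E] [NormedSpace 𝕜 E] {F : 𝕜 → E} {s : Set 𝕜} {y : 𝕜}
    (hF : ContDiffOn 𝕜 2 F s) (hs : IsOpen s) (hy : y ∈ s) : DifferentiableAt 𝕜 (deriv F) y :=
  ((hF.deriv_of_isOpen hs (by norm_num : (1 : WithTop ℕ∞) + 1 ≤ 2)).differentiableOn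
    one_ne_zero).differentiableAt (hs.mem_nhds hy)

theorem summable_sq_mul_pow_sub_two {q : ℝ} (hq0 : 0 ≤ q) (hq1 : q < 1) :
    Summable fun n : ℕ => ((n : ℝ) + 1) ^ 2 * q ^ (n - 2) := by
  have hq : ‖q‖ < 1 := by rwa [Real.norm_of_nonneg hq0]
  refine (summable_nat_add_iff 2).mp ?_
  have := ((summable_pow_mul_geometric_of_norm_lt_one 2 hq).add
    ((summable_pow_mul_geometric_of_norm_lt_one 1 hq).mul_left 6)).add
    ((summable_geometric_of_norm_lt_one hq).mul_left 9)
  refine this.congr fun n => ?_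
  simp only [Nat.add_sub_cancel]
  push_cast; ring

theorem abs_one_sub_pow_le {a y : ℝ} (ha : 0 ≤ a) (hy : y ∈ Icc a 1) {k : ℕ} (hk : k ≤ 2)
    (n : ℕ) : |(1 - y) ^ (n - k)| ≤ (1 - a) ^ (n - 2) := by
  have h1y : |1 - y| ≤ 1 - a := abs_le.2 ⟨by linarith [hy.1, hy.2], by linarith [hy.1]⟩
  rw [abs_pow]
  exact (pow_le_pow_left₀ (abs_nonneg _) h1y _).trans
    (pow_le_pow_of_le_one (by linarith [hy.1, hy.2]) (by linarith) (by omega))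

theorem abs_mul_le_of_mem_Icc {a y b B : ℝ} (ha : 0 ≤ a) (hy : y ∈ Icc a 1) (hb : |b| ≤ B) :
    |y| * |b| ≤ B :=
  (mul_le_of_le_one_left (abs_nonneg _) (abs_le.2 ⟨by linarith [hy.1], hy.2⟩)).trans hb

noncomputable def kernelTerm (n : ℕ) (F : ℝ → ℝ) (y : ℝ) : ℝ :=
  (1 - y) ^ n * y * F y

noncomputable def kernelTermDeriv (n : ℕ) (F : ℝ → ℝ) (y : ℝ) : ℝ :=
  -n * (1 - y) ^ (n - 1) * (y * F y) + (1 - y) ^ n * (F y + y * deriv F y)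

-- The truncated `((n - 1 : ℕ) : ℝ)` is what `HasDerivAt.pow` produces; at `n = 0` it is
-- multiplied by `n = 0`, so the truncation is harmless.
noncomputable def kernelTermDeriv2 (n : ℕ) (F : ℝ → ℝ) (y : ℝ) : ℝ :=
  n * (n - 1 : ℕ) * (1 - y) ^ (n - 2) * (y * F y)
    - 2 * n * (1 - y) ^ (n - 1) * (F y + y * deriv F y)
    + (1 - y) ^ n * (2 * deriv F y + y * deriv (deriv F) y)

theorem hatK_eq_tsum_kernelTerm (f : ℕ → ℝ → ℝ) :
    hatK f = fun y => ∑' n, kernelTerm n (f (n + 1)) y := rfl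

theorem hasDerivAt_kernelTerm (n : ℕ) {F : ℝ → ℝ} {y : ℝ} (hF : DifferentiableAt ℝ F y) :
    HasDerivAt (kernelTerm n F) (kernelTermDeriv n F y) y := by
  have h : HasDerivAt (fun z => (1 - z) ^ n * (z * F z)) _ y :=
    (((hasDerivAt_id' y).const_sub 1).pow n).mul ((hasDerivAt_id' y).mul hF.hasDerivAt)
  rw [show kernelTerm n F = fun z => (1 - z) ^ n * (z * F z) from
    funext fun z => mul_assoc _ _ _]
  convert h using 1
  simp only [kernelTermDeriv, Pi.pow_apply]; ring

theorem hasDerivAt_kernelTermDeriv (n : ℕ) {F : ℝ → ℝ} {y : ℝ} (hF : DifferentiableAt ℝ F y)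
    (hF' : DifferentiableAt ℝ (deriv F) y) :
    HasDerivAt (kernelTermDeriv n F) (kernelTermDeriv2 n F y) y := by
  have hpow (k : ℕ) := ((hasDerivAt_id' y).const_sub 1).pow k
  have hyF := (hasDerivAt_id' y).mul hF.hasDerivAt
  have h : HasDerivAt (fun z => -n * ((1 - z) ^ (n - 1) * (z * F z))
      + (1 - z) ^ n * (F z + z * deriv F z)) _ y :=
    (((hpow (n - 1)).mul hyF).const_mul (-n : ℝ)).add
      ((hpow n).mul (hF.hasDerivAt.add ((hasDerivAt_id' y).mul hF'.hasDerivAt)))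
  rw [show kernelTermDeriv n F = fun z => -n * ((1 - z) ^ (n - 1) * (z * F z))
      + (1 - z) ^ n * (F z + z * deriv F z) from
    funext fun z => by simp only [kernelTermDeriv]; ring]
  convert h using 1
  simp only [kernelTermDeriv2, Pi.pow_apply, Pi.mul_apply, show n - 1 - 1 = n - 2 by omega]; ring

section Bounds

variable {n : ℕ} {F : ℝ → ℝ} {a y B : ℝ}

theorem abs_kernelTerm_le (ha : 0 ≤ a) (hy : y ∈ Icc a 1) (hF : |F y| ≤ B) :
    |kernelTerm n F y| ≤ B * (((n : ℝ) + 1) ^ 2 * (1 - a) ^ (n - 2)) := by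
  have h0 := abs_one_sub_pow_le ha hy (k := 0) (by norm_num) n
  have hP := pow_nonneg (by linarith [hy.1, hy.2] : 0 ≤ 1 - a) (n - 2)
  have hn := (n.cast_nonneg : (0:ℝ) ≤ n)
  have hB : 0 ≤ B := (abs_nonneg _).trans hF
  rw [Nat.sub_zero] at h0
  calc |kernelTerm n F y| ≤ (1 - a) ^ (n - 2) * B := by
        rw [kernelTerm, mul_assoc, abs_mul, abs_mul]
        gcongr
        exact abs_mul_le_of_mem_Icc ha hy hF
    _ ≤ _ := by nlinarith [mul_nonneg hB hP, mul_nonneg (mul_nonneg hB hP) hn]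

theorem abs_kernelTermDeriv_le (ha : 0 ≤ a) (hy : y ∈ Icc a 1) (hF : |F y| ≤ B)
    (hF' : |deriv F y| ≤ B) :
    |kernelTermDeriv n F y| ≤ 3 * B * (((n : ℝ) + 1) ^ 2 * (1 - a) ^ (n - 2)) := by
  have h0 := abs_one_sub_pow_le ha hy (k := 0) (by norm_num) n
  have h1 := abs_one_sub_pow_le ha hy (k := 1) (by norm_num) n
  have hP := pow_nonneg (by linarith [hy.1, hy.2] : 0 ≤ 1 - a) (n - 2)
  have hn := (n.cast_nonneg : (0:ℝ) ≤ n)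
  have hB : 0 ≤ B := (abs_nonneg _).trans hF
  have hyF := abs_mul_le_of_mem_Icc ha hy hF
  have hS : |F y + y * deriv F y| ≤ 2 * B :=
    (abs_add_le _ _).trans (by rw [abs_mul]; linarith [abs_mul_le_of_mem_Icc ha hy hF'])
  rw [Nat.sub_zero] at h0
  calc |kernelTermDeriv n F y|
      ≤ n * (1 - a) ^ (n - 2) * B + (1 - a) ^ (n - 2) * (2 * B) := by
        refine (abs_add_le _ _).trans (add_le_add ?_ ?_) <;>
          simp only [abs_mul, abs_neg, Nat.abs_cast] <;> gcongr
    _ ≤ _ := by nlinarith [mul_nonneg hB hP, mul_nonneg (mul_nonneg hB hP) hn]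

theorem abs_kernelTermDeriv2_le (ha : 0 ≤ a) (hy : y ∈ Icc a 1) (hF : |F y| ≤ B)
    (hF' : |deriv F y| ≤ B) (hF'' : |deriv (deriv F) y| ≤ B) :
    |kernelTermDeriv2 n F y| ≤ 8 * B * (((n : ℝ) + 1) ^ 2 * (1 - a) ^ (n - 2)) := by
  have h0 := abs_one_sub_pow_le ha hy (k := 0) (by norm_num) n
  have h1 := abs_one_sub_pow_le ha hy (k := 1) (by norm_num) n
  have h2 := abs_one_sub_pow_le ha hy (k := 2) le_rfl n
  have hP := pow_nonneg (by linarith [hy.1, hy.2] : 0 ≤ 1 - a) (n - 2)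
  have hn := (n.cast_nonneg : (0:ℝ) ≤ n)
  have hn1 : ((n - 1 : ℕ) : ℝ) ≤ n := by exact_mod_cast n.sub_le 1
  have hB : 0 ≤ B := (abs_nonneg _).trans hF
  have hyF := abs_mul_le_of_mem_Icc ha hy hF
  have hS : |F y + y * deriv F y| ≤ 2 * B :=
    (abs_add_le _ _).trans (by rw [abs_mul]; linarith [abs_mul_le_of_mem_Icc ha hy hF'])
  have hS' : |2 * deriv F y + y * deriv (deriv F) y| ≤ 3 * B :=
    (abs_add_le _ _).trans (by
      rw [abs_mul, abs_mul, abs_two]; linarith [abs_mul_le_of_mem_Icc ha hy hF''])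
  rw [Nat.sub_zero] at h0
  calc |kernelTermDeriv2 n F y|
      ≤ n * n * (1 - a) ^ (n - 2) * B + 2 * n * (1 - a) ^ (n - 2) * (2 * B)
          + (1 - a) ^ (n - 2) * (3 * B) := by
        refine (abs_add_le _ _).trans (add_le_add ((abs_sub _ _).trans (add_le_add ?_ ?_)) ?_) <;>
          simp only [abs_mul, Nat.abs_cast, abs_two] <;> gcongr
    _ ≤ _ := by nlinarith [mul_nonneg hB hP, mul_nonneg (mul_nonneg hB hP) hn,
      mul_nonneg (mul_nonneg (mul_nonneg hB hP) hn) hn]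

end Bounds

noncomputable def jumpFlux (c : ℝ) (f : ℕ → ℝ → ℝ) (x : ℝ) (ℓ : ℕ) : ℝ :=
  c * ((ℓ : ℝ) * ((ℓ : ℝ) - 1) / 2) * ((1 - x) ^ (ℓ - 1) * x * f (ℓ + 1) x)

theorem kernelTerm_mul_hatG (c : ℝ) (f : ℕ → ℝ → ℝ) (x : ℝ) (n : ℕ) :
    (1 - x) ^ n * x * hatG c f x (n + 1)
      = c / 2 * (x * (1 - x)) * kernelTermDeriv2 n (f (n + 1)) x
        + (jumpFlux c f x (n + 1) - jumpFlux c f x n) := by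
  rcases n with _ | _ | m <;>
    simp only [kernelTermDeriv2, hatG, jumpFlux, Nat.zero_sub, Nat.add_sub_cancel] <;>
    push_cast <;> ring

theorem abs_jumpFlux_le {c : ℝ} {f : ℕ → ℝ → ℝ} {a x B : ℝ} (ha : 0 ≤ a) (hx : x ∈ Icc a 1)
    {ℓ : ℕ} (hf : |f (ℓ + 1) x| ≤ B) :
    |jumpFlux c f x ℓ| ≤ |c| * B * (((ℓ : ℝ) + 1) ^ 2 * (1 - a) ^ (ℓ - 2)) := by
  have hP := abs_one_sub_pow_le ha hx (k := 1) (by norm_num) ℓ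
  have hxf := abs_mul_le_of_mem_Icc ha hx hf
  have hP' := pow_nonneg (by linarith [hx.1, hx.2] : 0 ≤ 1 - a) (ℓ - 2)
  have hrate : |(ℓ : ℝ) * ((ℓ : ℝ) - 1) / 2| ≤ ((ℓ : ℝ) + 1) ^ 2 := by
    rw [abs_le]; constructor <;> nlinarith [(ℓ.cast_nonneg : (0:ℝ) ≤ ℓ)]
  calc |jumpFlux c f x ℓ| ≤ |c| * ((ℓ : ℝ) + 1) ^ 2 * ((1 - a) ^ (ℓ - 2) * B) := by
        simp only [jumpFlux, abs_mul, mul_assoc (|(1 - x) ^ (ℓ - 1)|)]; gcongr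
    _ = _ := by ring

section KernelSeries

variable {f : ℕ → ℝ → ℝ} {a B y : ℝ}

theorem hasDerivAt_hatK (ha : 0 < a) (hf : ∀ n, ContDiffOn ℝ 2 (f (n + 1)) (Ioo a 1))
    (hB : ∀ n, ∀ z ∈ Ioo a 1,
      |f (n + 1) z| ≤ B ∧ |deriv (f (n + 1)) z| ≤ B ∧ |deriv (deriv (f (n + 1))) z| ≤ B)
    (hy : y ∈ Ioo a 1) :
    HasDerivAt (hatK f) (∑' n, kernelTermDeriv n (f (n + 1)) y) y := by
  have hsum := summable_sq_mul_pow_sub_two (sub_nonneg.2 (hy.1.trans hy.2).le) (sub_lt_self 1 ha)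
  rw [hatK_eq_tsum_kernelTerm]
  refine hasDerivAt_tsum_of_isPreconnected (hsum.mul_left (3 * B)) isOpen_Ioo isPreconnected_Ioo
    (fun n z hz => hasDerivAt_kernelTerm n ?_) (fun n z hz => ?_) hy
    (.of_norm_bounded (hsum.mul_left B) fun n =>
      abs_kernelTerm_le ha.le (Ioo_subset_Icc_self hy) (hB n y hy).1) hy
  · exact ((hf n).differentiableOn two_ne_zero).differentiableAt (isOpen_Ioo.mem_nhds hz)
  · obtain ⟨h0, h1, -⟩ := hB n z hz
    exact abs_kernelTermDeriv_le ha.le (Ioo_subset_Icc_self hz) h0 h1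

theorem hasDerivAt_tsum_kernelTermDeriv (ha : 0 < a)
    (hf : ∀ n, ContDiffOn ℝ 2 (f (n + 1)) (Ioo a 1))
    (hB : ∀ n, ∀ z ∈ Ioo a 1,
      |f (n + 1) z| ≤ B ∧ |deriv (f (n + 1)) z| ≤ B ∧ |deriv (deriv (f (n + 1))) z| ≤ B)
    (hy : y ∈ Ioo a 1) :
    HasDerivAt (fun z => ∑' n, kernelTermDeriv n (f (n + 1)) z)
      (∑' n, kernelTermDeriv2 n (f (n + 1)) y) y := by
  have hsum := summable_sq_mul_pow_sub_two (sub_nonneg.2 (hy.1.trans hy.2).le) (sub_lt_self 1 ha)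
  refine hasDerivAt_tsum_of_isPreconnected (hsum.mul_left (8 * B)) isOpen_Ioo isPreconnected_Ioo
    (fun n z hz => hasDerivAt_kernelTermDeriv n ?_ ?_) (fun n z hz => ?_) hy
    (.of_norm_bounded (hsum.mul_left (3 * B)) fun n => ?_) hy
  · exact ((hf n).differentiableOn two_ne_zero).differentiableAt (isOpen_Ioo.mem_nhds hz)
  · exact (hf n).differentiableAt_deriv_of_isOpen isOpen_Ioo hz
  · obtain ⟨h0, h1, h2⟩ := hB n z hz
    exact abs_kernelTermDeriv2_le ha.le (Ioo_subset_Icc_self hz) h0 h1 h2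
  · obtain ⟨h0, h1, -⟩ := hB n y hy
    exact abs_kernelTermDeriv_le ha.le (Ioo_subset_Icc_self hy) h0 h1

theorem summable_kernelTermDeriv2 (ha : 0 < a)
    (hB : ∀ n, ∀ z ∈ Ioo a 1,
      |f (n + 1) z| ≤ B ∧ |deriv (f (n + 1)) z| ≤ B ∧ |deriv (deriv (f (n + 1))) z| ≤ B)
    (hy : y ∈ Ioo a 1) : Summable fun n => kernelTermDeriv2 n (f (n + 1)) y := by
  have hsum := summable_sq_mul_pow_sub_two (sub_nonneg.2 (hy.1.trans hy.2).le) (sub_lt_self 1 ha)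
  refine .of_norm_bounded (hsum.mul_left (8 * B)) fun n => ?_
  obtain ⟨h0, h1, h2⟩ := hB n y hy
  exact abs_kernelTermDeriv2_le ha.le (Ioo_subset_Icc_self hy) h0 h1 h2

theorem summable_jumpFlux (c : ℝ) (ha : 0 < a) (hB : ∀ n, ∀ z ∈ Ioo a 1, |f (n + 1) z| ≤ B)
    (hy : y ∈ Ioo a 1) : Summable fun n => jumpFlux c f y n :=
  .of_norm_bounded ((summable_sq_mul_pow_sub_two (sub_nonneg.2 (hy.1.trans hy.2).le)
    (sub_lt_self 1 ha)).mul_left (|c| * B))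
    fun n => abs_jumpFlux_le ha.le (Ioo_subset_Icc_self hy) (hB n y hy)

end KernelSeries

theorem wright_fisher_intertwining_general
    (c : ℝ) (f : ℕ → ℝ → ℝ)
    (U : Set ℝ) (hUI : Icc (0 : ℝ) 1 ⊆ U)
    (hf : ∀ ℓ : ℕ, 1 ≤ ℓ → ContDiffOn ℝ 2 (f ℓ) U)
    (C : ℝ)
    (hbound : ∀ x ∈ Icc (0 : ℝ) 1, ∀ ℓ : ℕ, 1 ≤ ℓ →
      |f ℓ x| ≤ C ∧ |deriv (f ℓ) x| ≤ C ∧ |deriv (deriv (f ℓ)) x| ≤ C) :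
    ∀ x ∈ Ioo (0 : ℝ) 1,
      (∀ᶠ y in nhds x, DifferentiableAt ℝ (hatK f) y) ∧
      DifferentiableAt ℝ (deriv (hatK f)) x ∧
      ∑' ℓ : ℕ, (1 - x) ^ ℓ * x * hatG c f x (ℓ + 1)
        = c / 2 * (x * (1 - x)) * deriv (deriv (hatK f)) x := by
  rintro x ⟨hx0, hx1⟩
  have ha : 0 < x / 2 := by linarith
  have hx : x ∈ Ioo (x / 2) 1 := ⟨by linarith, hx1⟩
  have hsub : Ioo (x / 2) 1 ⊆ Icc 0 1 := fun z hz => ⟨by linarith [hz.1], hz.2.le⟩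
  have hf' (n : ℕ) : ContDiffOn ℝ 2 (f (n + 1)) (Ioo (x / 2) 1) :=
    (hf (n + 1) n.succ_pos).mono (hsub.trans hUI)
  have hB (n : ℕ) (z) (hz : z ∈ Ioo (x / 2) 1) := hbound z (hsub hz) (n + 1) n.succ_pos
  have hnhds : Ioo (x / 2) 1 ∈ nhds x := isOpen_Ioo.mem_nhds hx
  have hderiv (y) (hy : y ∈ Ioo (x / 2) 1) := hasDerivAt_hatK ha hf' hB hy
  have hderiv2 : HasDerivAt (deriv (hatK f)) (∑' n, kernelTermDeriv2 n (f (n + 1)) x) x :=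
    (hasDerivAt_tsum_kernelTermDeriv ha hf' hB hx).congr_of_eventuallyEq
      (eventually_of_mem hnhds fun y hy => (hderiv y hy).deriv)
  refine ⟨eventually_of_mem hnhds fun y hy => (hderiv y hy).differentiableAt,
    hderiv2.differentiableAt, ?_⟩
  have hflux := (summable_jumpFlux c ha (fun n z hz => (hB n z hz).1) hx).hasSum_succ_sub
  simp_rw [hderiv2.deriv, kernelTerm_mul_hatG]
  rw [((summable_kernelTermDeriv2 ha hB hx).mul_left _).tsum_add hflux.summable, tsum_mul_left,
    hflux.tsum_eq]
  simp [jumpFlux]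

/-- Intertwining relation `K̂ Ĝ f = G K̂ f` for the Wright–Fisher generator
`G g(x) = (c/2) x (1-x) g''(x)` and the geometric kernel `K̂(x,ℓ) = (1-x)^{ℓ-1} x`. -/
theorem wright_fisher_intertwining
    (c : ℝ) (hc : 0 ≤ c) (f : ℕ → ℝ → ℝ)
    (U : Set ℝ) (hU : IsOpen U) (hUI : Icc (0 : ℝ) 1 ⊆ U)
    (hf : ∀ ℓ : ℕ, 1 ≤ ℓ → ContDiffOn ℝ 2 (f ℓ) U)
    (C : ℝ)
    (hbound : ∀ x ∈ Icc (0 : ℝ) 1, ∀ ℓ : ℕ, 1 ≤ ℓ →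
      |f ℓ x| ≤ C ∧ |deriv (f ℓ) x| ≤ C ∧ |deriv (deriv (f ℓ)) x| ≤ C) :
    ∀ x ∈ Ioo (0 : ℝ) 1,
      (∀ᶠ y in nhds x, DifferentiableAt ℝ (hatK f) y) ∧
      DifferentiableAt ℝ (deriv (hatK f)) x ∧
      ∑' ℓ : ℕ, (1 - x) ^ ℓ * x * hatG c f x (ℓ + 1)
        = c / 2 * (x * (1 - x)) * deriv (deriv (hatK f)) x :=
  wright_fisher_intertwining_general c f U hUI hf C hbound
end

section
/- Let (Ω, 𝔽, ℙ) be a probability space, K ∈ ℕ, K ≥ 1, and let (r_j)_{j ≥ K} be a nondecreasing sequence of positive reals with r_{K+1} > r_K and Σ_{j ≥ K} 1/r_j < ∞. Let (T_j)_{j ≥ K+1} be independent random variables with T_j exponentially distributed with rate r_j. Then there exists a finite constant C such that ℙ( Σ_{j ≥ K+1} T_j > t ) ≤ C exp( -(r_K + r_{K+1}) t / 2 ) for all t ≥ 0; in particular, ℙ( Σ_{j ≥ K+1} T_j > t ) / e^{-r_K t} → 0 as t → ∞. -/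
/-!
Chernoff's bound at the exponent `λ = (r_K + r_{K+1})/2`, which lies strictly below every rate
`r_j`, `j ≥ K + 1`. The moment generating function of `T_j` at `λ` is
`r_j / (r_j - λ) = 1 + λ / (r_j - λ) ≤ exp (c / r_j)` with `c = λ r_{K+1} / (r_{K+1} - λ)`
independent of `j`, so by independence `E[exp (λ Σ_{j<n} T_j)] ≤ exp (c Σ_j 1/r_j)` uniformly
in `n`, and monotone convergence gives `ℙ(Σ_j T_j > t) ≤ exp (c Σ_j 1/r_j) e^{-λt}`. Since
`λ > r_K`, this is still `o(e^{-r_K t})`.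
-/

open MeasureTheory ProbabilityTheory Set Filter Real Topology
open scoped ENNReal

section ExponentialDistribution

variable {r l : ℝ}

lemma exponentialPDFReal_mul_exp (x : ℝ) :
    exponentialPDFReal r x * exp (l * x)
      = (Ici 0).indicator (fun x => r * exp ((l - r) * x)) x := by
  by_cases hx : 0 ≤ x
  · simp only [exponentialPDFReal, gammaPDFReal, if_pos hx, indicator_of_mem (mem_Ici.2 hx),
      rpow_one, Gamma_one, div_one, sub_self, rpow_zero, mul_one, mul_assoc, ← exp_add]
    ring_nf
  · simp [exponentialPDFReal, gammaPDFReal, hx]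

lemma expMeasure_eq_withDensity (r : ℝ) :
    expMeasure r = volume.withDensity (fun x => (exponentialPDFReal r x).toNNReal) := rfl

lemma toNNReal_exponentialPDFReal_smul (hr : 0 < r) (g : ℝ → ℝ) :
    (fun x => (exponentialPDFReal r x).toNNReal • g x)
      = fun x => exponentialPDFReal r x * g x := by
  ext x
  rw [NNReal.smul_def, smul_eq_mul, coe_toNNReal _ (exponentialPDFReal_nonneg hr x)]

lemma integrable_exp_mul_expMeasure (hr : 0 < r) (hl : l < r) :
    Integrable (fun x => exp (l * x)) (expMeasure r) := by
  rw [expMeasure_eq_withDensity, integrable_withDensity_iff_integrable_smul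
    (measurable_exponentialPDFReal r).real_toNNReal, toNNReal_exponentialPDFReal_smul hr]
  simp_rw [exponentialPDFReal_mul_exp]
  rw [integrable_indicator_iff measurableSet_Ici, integrableOn_Ici_iff_integrableOn_Ioi]
  exact (integrableOn_exp_mul_Ioi (by linarith) 0).const_mul r

lemma mgf_id_expMeasure (hr : 0 < r) (hl : l < r) : mgf id (expMeasure r) l = r / (r - l) := by
  rw [mgf, expMeasure_eq_withDensity, integral_withDensity_eq_integral_smul
    (measurable_exponentialPDFReal r).real_toNNReal]
  simp_rw [id, toNNReal_exponentialPDFReal_smul hr, exponentialPDFReal_mul_exp]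
  rw [integral_indicator measurableSet_Ici, integral_Ici_eq_integral_Ioi, integral_const_mul,
    integral_exp_mul_Ioi (by linarith), mul_zero, exp_zero,
    neg_div, ← div_neg, neg_sub, mul_one_div]

lemma ae_nonneg_expMeasure (r : ℝ) : ∀ᵐ x ∂expMeasure r, 0 ≤ x := by
  rw [ae_iff]
  simp only [not_le]
  change expMeasure r (Iio 0) = 0
  rw [expMeasure, gammaMeasure, withDensity_apply _ measurableSet_Iio]
  exact lintegral_exponentialPDF_of_nonpos le_rfl

end ExponentialDistribution

lemma div_sub_le_exp_div {l a b : ℝ} (hl : 0 ≤ l) (hla : l < a) (hab : a ≤ b) :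
    b / (b - l) ≤ exp (l * a / (a - l) / b) := by
  have hbl : 0 < b - l := by linarith
  calc b / (b - l) = l / (b - l) + 1 := by field_simp; ring
    _ ≤ exp (l / (b - l)) := add_one_le_exp _
    _ ≤ exp (l * a / (a - l) / b) := by
      refine exp_le_exp.2 ?_
      rw [div_div, div_le_div_iff₀ hbl (by nlinarith)]
      -- `l (a - l) b ≤ l a (b - l)` reduces to `l² a ≤ l² b`
      nlinarith [mul_le_mul_of_nonneg_left hab (mul_nonneg hl hl)]

lemma prod_div_sub_le_exp_mul_tsum {ρ : ℕ → ℝ} {l a : ℝ} (hl : 0 ≤ l) (hla : l < a)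
    (hρ : ∀ j, a ≤ ρ j) (hs : Summable fun j => 1 / ρ j) (n : ℕ) :
    ∏ j ∈ Finset.range n, ρ j / (ρ j - l) ≤ exp (l * a / (a - l) * ∑' j, 1 / ρ j) := by
  have hρpos : ∀ j, 0 < ρ j := fun j => by linarith [hρ j]
  calc ∏ j ∈ Finset.range n, ρ j / (ρ j - l)
      ≤ ∏ j ∈ Finset.range n, exp (l * a / (a - l) / ρ j) :=
        Finset.prod_le_prod (fun j _ => div_nonneg (hρpos j).le (by linarith [hρ j]))
          fun j _ => div_sub_le_exp_div hl hla (hρ j)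
    _ = exp (l * a / (a - l) * ∑ j ∈ Finset.range n, 1 / ρ j) := by
        simp_rw [← exp_sum, Finset.mul_sum, mul_one_div]
    _ ≤ exp (l * a / (a - l) * ∑' j, 1 / ρ j) := by
        gcongr
        · exact div_nonneg (mul_nonneg hl (by linarith)) (by linarith)
        · exact hs.sum_le_tsum _ fun j _ => (one_div_pos.2 (hρpos j)).le

lemma measure_lt_tsum_eq_iSup {Ω : Type*} [MeasurableSpace Ω] (μ : Measure Ω)
    (f : ℕ → Ω → ℝ≥0∞) (a : ℝ≥0∞) :
    μ {ω | a < ∑' j, f j ω} = ⨆ n, μ {ω | a < ∑ j ∈ Finset.range n, f j ω} := by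
  have hunion : {ω | a < ∑' j, f j ω} = ⋃ n, {ω | a < ∑ j ∈ Finset.range n, f j ω} := by
    ext ω
    simp only [mem_ofPred_eq, mem_iUnion, ENNReal.tsum_eq_iSup_nat, lt_iSup_iff]
  rw [hunion]
  refine Monotone.measure_iUnion fun m n hmn ω (hω : a < _) => ?_
  exact hω.trans_le (Finset.sum_le_sum_of_subset (Finset.range_subset_range.2 hmn))

namespace ProbabilityTheory

variable {Ω : Type*} [MeasurableSpace Ω] {μ : Measure Ω}

lemma iIndepFun.measure_lt_tsum_le {X : ℕ → Ω → ℝ} (hindep : iIndepFun X μ)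
    (hmeas : ∀ j, Measurable (X j)) (hnn : ∀ j, 0 ≤ᵐ[μ] X j) {l C : ℝ} (hl : 0 ≤ l)
    (hint : ∀ j, Integrable (fun ω => exp (l * X j ω)) μ)
    (hC : ∀ n, ∏ j ∈ Finset.range n, mgf (X j) μ l ≤ C) (t : ℝ) :
    μ {ω | ENNReal.ofReal t < ∑' j, ENNReal.ofReal (X j ω)}
      ≤ ENNReal.ofReal (C * exp (-l * t)) := by
  have := hindep.isProbabilityMeasure
  rw [measure_lt_tsum_eq_iSup]
  refine iSup_le fun n => ?_
  have hsub : {ω | ENNReal.ofReal t < ∑ j ∈ Finset.range n, ENNReal.ofReal (X j ω)}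
      ≤ᵐ[μ] {ω | t ≤ (∑ j ∈ Finset.range n, X j) ω} := by
    filter_upwards [ae_all_iff.2 hnn] with ω hω (hlt : ENNReal.ofReal t < _)
    rw [← ENNReal.ofReal_sum_of_nonneg fun j _ => hω j,
      ENNReal.ofReal_lt_ofReal_iff'] at hlt
    show t ≤ (∑ j ∈ Finset.range n, X j) ω
    simpa only [Finset.sum_apply] using hlt.1.le
  have hchernoff := measure_ge_le_exp_mul_mgf (X := ∑ j ∈ Finset.range n, X j) t hl
    (hindep.integrable_exp_mul_sum hmeas fun j _ => hint j)
  rw [hindep.mgf_sum hmeas] at hchernoff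
  calc _ ≤ μ {ω | t ≤ (∑ j ∈ Finset.range n, X j) ω} := measure_mono_ae hsub
    _ = ENNReal.ofReal (μ.real {ω | t ≤ (∑ j ∈ Finset.range n, X j) ω}) :=
        (ENNReal.ofReal_toReal (measure_ne_top _ _)).symm
    _ ≤ ENNReal.ofReal (C * exp (-l * t)) := by
        gcongr
        calc _ ≤ exp (-l * t) * ∏ j ∈ Finset.range n, mgf (X j) μ l := hchernoff
          _ ≤ exp (-l * t) * C := by gcongr; exact hC n
          _ = C * exp (-l * t) := mul_comm _ _

lemma iIndepFun.measure_lt_tsum_le_of_expMeasure {X : ℕ → Ω → ℝ} {ρ : ℕ → ℝ}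
    {l a : ℝ} (hl : 0 ≤ l) (hla : l < a) (hρ : ∀ j, a ≤ ρ j) (hs : Summable fun j => 1 / ρ j)
    (hindep : iIndepFun X μ) (hmeas : ∀ j, Measurable (X j))
    (hlaw : ∀ j, μ.map (X j) = expMeasure (ρ j)) (t : ℝ) :
    μ {ω | ENNReal.ofReal t < ∑' j, ENNReal.ofReal (X j ω)}
      ≤ ENNReal.ofReal (exp (l * a / (a - l) * ∑' j, 1 / ρ j) * exp (-l * t)) := by
  have hρpos : ∀ j, 0 < ρ j := fun j => by linarith [hρ j]
  have hlρ : ∀ j, l < ρ j := fun j => hla.trans_le (hρ j)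
  have hmgf : ∀ j, mgf (X j) μ l = ρ j / (ρ j - l) := fun j => by
    rw [← mgf_id_map (hmeas j).aemeasurable, hlaw, mgf_id_expMeasure (hρpos j) (hlρ j)]
  refine hindep.measure_lt_tsum_le hmeas (fun j => ?_) hl (fun j => ?_) (fun n => ?_) t
  · exact ae_of_ae_map (hmeas j).aemeasurable ((hlaw j).symm ▸ ae_nonneg_expMeasure (ρ j))
  · refine (integrable_map_measure (g := fun x => exp (l * x))
      (measurable_const_mul l).exp.aestronglyMeasurable (hmeas j).aemeasurable).1 ?_
    rw [hlaw]
    exact integrable_exp_mul_expMeasure (hρpos j) (hlρ j)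
  · simp_rw [hmgf]
    exact prod_div_sub_le_exp_mul_tsum hl hla hρ hs n

end ProbabilityTheory

lemma tendsto_div_exp_of_le_mul_exp {f : ℝ → ℝ} {C a b : ℝ} (hf₀ : ∀ t, 0 ≤ f t)
    (hf : ∀ t, f t ≤ C * exp (-a * t)) (hba : b < a) :
    Tendsto (fun t => f t / exp (-b * t)) atTop (𝓝 0) := by
  have hdecay : Tendsto (fun t => C * exp (-((a - b) * t))) atTop (𝓝 0) := by
    simpa using (tendsto_exp_neg_atTop_nhds_zero.comp
      (tendsto_id.const_mul_atTop (sub_pos.2 hba))).const_mul C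
  refine tendsto_of_tendsto_of_tendsto_of_le_of_le tendsto_const_nhds hdecay
    (fun t => div_nonneg (hf₀ t) (exp_pos _).le) fun t => ?_
  rw [div_le_iff₀ (exp_pos _), mul_assoc, ← exp_add,
    show -((a - b) * t) + -b * t = -a * t by ring]
  exact hf t

theorem exponential_sum_tail_decay_general
    {Ω : Type*} [MeasurableSpace Ω] (P : Measure Ω) [IsProbabilityMeasure P]
    (K : ℕ) (r : ℕ → ℝ) (T : ℕ → Ω → ℝ)
    (hpos : ∀ j : ℕ, K ≤ j → 0 < r j)
    (hmono : ∀ i j : ℕ, K ≤ i → i ≤ j → r i ≤ r j)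
    (hgap : r K < r (K + 1))
    (hsum : Summable (fun j : ℕ => 1 / r (K + j)))
    (hmeas : ∀ j : ℕ, K + 1 ≤ j → Measurable (T j))
    (hindep : iIndepFun (fun j : ℕ => T (K + 1 + j)) P)
    (hlaw : ∀ j : ℕ, K + 1 ≤ j → Measure.map (T j) P = expMeasure (r j)) :
    (∃ C : ℝ, 0 ≤ C ∧ ∀ t : ℝ, 0 ≤ t →
      P {ω | ENNReal.ofReal t < ∑' j : ℕ, ENNReal.ofReal (T (K + 1 + j) ω)}
        ≤ ENNReal.ofReal (C * Real.exp (-((r K + r (K + 1)) / 2) * t))) ∧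
    Tendsto
      (fun t : ℝ =>
        (P {ω | ENNReal.ofReal t < ∑' j : ℕ, ENNReal.ofReal (T (K + 1 + j) ω)}).toReal
          / Real.exp (-(r K) * t))
      atTop (nhds 0) := by
  have hrK := hpos K le_rfl
  have hs : Summable fun j => 1 / r (K + 1 + j) := by
    simpa only [add_right_comm K 1, add_assoc] using (summable_nat_add_iff 1).2 hsum
  have htail := hindep.measure_lt_tsum_le_of_expMeasure (l := (r K + r (K + 1)) / 2)
    (a := r (K + 1)) (by linarith) (by linarith) (fun j => hmono _ _ (by omega) (by omega)) hs
    (fun j => hmeas _ (by omega)) (fun j => hlaw _ (by omega))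
  refine ⟨⟨_, (exp_pos _).le, fun t _ => htail t⟩, ?_⟩
  exact tendsto_div_exp_of_le_mul_exp (fun t => ENNReal.toReal_nonneg)
    (fun t => ENNReal.toReal_le_of_le_ofReal (by positivity) (htail t)) (by linarith)

/-- If `(r_j)_{j ≥ K}` is nondecreasing and positive with `r_{K+1} > r_K` and
`Σ_{j ≥ K} 1/r_j < ∞`, and `(T_j)_{j ≥ K+1}` are independent exponentials with rates `r_j`, then
`ℙ(Σ_{j ≥ K+1} T_j > t) ≤ C e^{-(r_K + r_{K+1})t/2}` for some finite constant `C`; in particular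
`ℙ(Σ_{j ≥ K+1} T_j > t)/e^{-r_K t} → 0` as `t → ∞`. -/
theorem exponential_sum_tail_decay
    {Ω : Type*} [MeasurableSpace Ω] (P : Measure Ω) [IsProbabilityMeasure P]
    (K : ℕ) (hK : 1 ≤ K) (r : ℕ → ℝ) (T : ℕ → Ω → ℝ)
    (hpos : ∀ j : ℕ, K ≤ j → 0 < r j)
    (hmono : ∀ i j : ℕ, K ≤ i → i ≤ j → r i ≤ r j)
    (hgap : r K < r (K + 1))
    (hsum : Summable (fun j : ℕ => 1 / r (K + j)))
    (hmeas : ∀ j : ℕ, K + 1 ≤ j → Measurable (T j))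
    (hindep : iIndepFun (fun j : ℕ => T (K + 1 + j)) P)
    (hlaw : ∀ j : ℕ, K + 1 ≤ j → Measure.map (T j) P = expMeasure (r j)) :
    (∃ C : ℝ, 0 ≤ C ∧ ∀ t : ℝ, 0 ≤ t →
      P {ω | ENNReal.ofReal t < ∑' j : ℕ, ENNReal.ofReal (T (K + 1 + j) ω)}
        ≤ ENNReal.ofReal (C * Real.exp (-((r K + r (K + 1)) / 2) * t))) ∧
    Tendsto
      (fun t : ℝ =>
        (P {ω | ENNReal.ofReal t < ∑' j : ℕ, ENNReal.ofReal (T (K + 1 + j) ω)}).toReal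
          / Real.exp (-(r K) * t))
      atTop (nhds 0) :=
  exponential_sum_tail_decay_general P K r T hpos hmono hgap hsum hmeas hindep hlaw
end

section
/- Fix α with 1 < α < 2 and define r_j = ∫_0^1 (1 - (1-x)^j - j x (1-x)^{j-1}) x^{-1-α}(1-x)^{α-1} dx for integers j ≥ 1. Then r_j / ( Γ(2-α) j^{α} / α ) → 1 as j → ∞, where Γ denotes the real Gamma function; moreover r_j > 0 for every j ≥ 2 and Σ_{j ≥ 2} 1/r_j < ∞. -/
open MeasureTheory Set Filter Real

/-- The pushing rates of the Beta coalescent with parameter `α`: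
`r_j = ∫_0^1 (1-(1-x)^j - jx(1-x)^{j-1}) x^{-1-α}(1-x)^{α-1} dx`. -/
noncomputable def betaPushRate (α : ℝ) (j : ℕ) : ℝ :=
  ∫ x in Ioo (0 : ℝ) 1,
    (1 - (1 - x) ^ j - (j : ℝ) * x * (1 - x) ^ (j - 1)) * x ^ (-1 - α) * (1 - x) ^ (α - 1)

/-!
Going from `j` to `j + 1` adds `j x^{1-α} (1-x)^{j+α-2}` to the integrand, so
`r_{j+1} - r_j = j B(2-α, j-1+α)`. Since `r_1 = 0`, these increments telescope to the closed form
`r_{n+2} = Γ(2-α) Γ(n+1+α) / (α Γ(n+1))`, which is positive. Euler's limit formula for `Γ` gives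
`Γ(n+1+α) ~ n! n^α`, hence `r_j ~ Γ(2-α) j^α / α`, and `Σ 1/r_j` converges by comparison with
`Σ j^{-α}` because `α > 1`.
-/

open scoped Topology

namespace Real

theorem Gamma_add_nat_eq_mul_prod {s : ℝ} (hs : 0 < s) (n : ℕ) :
    Gamma (s + n) = Gamma s * ∏ j ∈ Finset.range n, (s + j) := by
  induction n with
  | zero => simp
  | succ n ih =>
    rw [Nat.cast_succ, ← add_assoc, Gamma_add_one (by positivity), ih, Finset.prod_range_succ]
    ring

theorem GammaSeq_eq_Gamma_mul_div {s : ℝ} (hs : 0 < s) (n : ℕ) :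
    GammaSeq s n = n ^ s * Gamma (n + 1) * Gamma s / Gamma (n + 1 + s) := by
  have hprod := Gamma_add_nat_eq_mul_prod hs (n + 1)
  have hΓ : Gamma (n + 1 + s) ≠ 0 := (Gamma_pos_of_pos (by positivity)).ne'
  have hprod_ne : ∏ j ∈ Finset.range (n + 1), (s + j) ≠ 0 :=
    Finset.prod_ne_zero_iff.mpr fun j _ => by positivity
  rw [GammaSeq, Gamma_nat_eq_factorial, eq_div_iff hΓ, add_comm _ s, ← Nat.cast_add_one, hprod]
  field_simp

theorem tendsto_Gamma_nat_add_one_add_div {s : ℝ} (hs : 0 < s) :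
    Tendsto (fun n : ℕ => Gamma (n + 1 + s) / (Gamma (n + 1) * n ^ s)) atTop (𝓝 1) := by
  have hΓ : Gamma s ≠ 0 := (Gamma_pos_of_pos hs).ne'
  have h := tendsto_const_nhds (x := Gamma s) |>.div (GammaSeq_tendsto_Gamma s) hΓ
  rw [div_self hΓ] at h
  refine h.congr' ?_
  filter_upwards [eventually_gt_atTop 0] with n hn
  have hpow : (n : ℝ) ^ s ≠ 0 := (rpow_pos_of_pos (by exact_mod_cast hn) s).ne'
  have hΓs : Gamma (n + 1 + s) ≠ 0 := (Gamma_pos_of_pos (by positivity)).ne'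
  have hΓn : Gamma (n + 1) ≠ 0 := (Gamma_pos_of_pos (by positivity)).ne'
  rw [Pi.div_apply, GammaSeq_eq_Gamma_mul_div hs]
  field_simp

end Real

section BetaIntegral

variable {u v : ℝ}

theorem ofReal_rpow_mul_one_sub_rpow {x : ℝ} (hx : x ∈ Ioo (0 : ℝ) 1) :
    ((x ^ (u - 1) * (1 - x) ^ (v - 1) : ℝ) : ℂ) =
      (x : ℂ) ^ ((u : ℂ) - 1) * (1 - (x : ℂ)) ^ ((v : ℂ) - 1) := by
  rw [Complex.ofReal_mul, Complex.ofReal_cpow hx.1.le, Complex.ofReal_cpow (by linarith [hx.2])]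
  push_cast
  ring

theorem integrableOn_rpow_mul_one_sub_rpow (hu : 0 < u) (hv : 0 < v) :
    IntegrableOn (fun x : ℝ => x ^ (u - 1) * (1 - x) ^ (v - 1)) (Ioo 0 1) := by
  have h := Complex.betaIntegral_convergent (u := u) (v := v) (by simpa) (by simpa)
  rw [intervalIntegrable_iff_integrableOn_Ioo_of_le zero_le_one] at h
  refine IntegrableOn.congr_fun h.re (fun x hx => ?_) measurableSet_Ioo
  rw [RCLike.re_to_complex, ← ofReal_rpow_mul_one_sub_rpow hx, Complex.ofReal_re]

theorem integral_rpow_mul_one_sub_rpow (hu : 0 < u) (hv : 0 < v) :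
    ∫ x in Ioo (0 : ℝ) 1, x ^ (u - 1) * (1 - x) ^ (v - 1) =
      Gamma u * Gamma v / Gamma (u + v) := by
  have hbeta : Complex.betaIntegral u v =
      ((∫ x in Ioo (0 : ℝ) 1, x ^ (u - 1) * (1 - x) ^ (v - 1) : ℝ) : ℂ) := by
    rw [Complex.betaIntegral, intervalIntegral.integral_of_le zero_le_one,
      integral_Ioc_eq_integral_Ioo, ← integral_complex_ofReal]
    exact setIntegral_congr_fun measurableSet_Ioo fun x hx =>
      (ofReal_rpow_mul_one_sub_rpow hx).symm
  have h := Complex.betaIntegral_eq_Gamma_mul_div u v (by simpa) (by simpa)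
  rw [hbeta, ← Complex.ofReal_add, Complex.Gamma_ofReal, Complex.Gamma_ofReal,
    Complex.Gamma_ofReal] at h
  exact_mod_cast h

end BetaIntegral

noncomputable def betaPushIntegrand (α : ℝ) (j : ℕ) (x : ℝ) : ℝ :=
  (1 - (1 - x) ^ j - (j : ℝ) * x * (1 - x) ^ (j - 1)) * x ^ (-1 - α) * (1 - x) ^ (α - 1)

section PushRate

variable {α : ℝ}

theorem betaPushRate_eq_integral (j : ℕ) :
    betaPushRate α j = ∫ x in Ioo (0 : ℝ) 1, betaPushIntegrand α j x := rfl

theorem betaPushIntegrand_one : betaPushIntegrand α 1 = 0 := by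
  funext x
  simp [betaPushIntegrand]

theorem betaPushRate_one : betaPushRate α 1 = 0 := by
  rw [betaPushRate_eq_integral, betaPushIntegrand_one, Pi.zero_def, integral_zero]

theorem betaPushIntegrand_add_two (n : ℕ) {x : ℝ} (hx : x ∈ Ioo (0 : ℝ) 1) :
    betaPushIntegrand α (n + 2) x =
      betaPushIntegrand α (n + 1) x + (n + 1) * (x ^ (2 - α - 1) * (1 - x) ^ (n + α - 1)) := by
  have hx1 : 0 < 1 - x := by linarith [hx.2]
  have hxpow : x ^ (2 - α - 1) = x ^ 2 * x ^ (-1 - α) := by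
    rw [← rpow_natCast, ← rpow_add hx.1]
    ring_nf
  have hx1pow : (1 - x) ^ (n + α - 1) = (1 - x) ^ n * (1 - x) ^ (α - 1) := by
    rw [← rpow_natCast, ← rpow_add hx1]
    ring_nf
  rw [hxpow, hx1pow, betaPushIntegrand, betaPushIntegrand]
  push_cast
  simp only [pow_succ]
  ring

variable (hα0 : 0 < α) (hα2 : α < 2)
include hα0 hα2

theorem integrableOn_betaPushIntegrand_add_one (n : ℕ) :
    IntegrableOn (betaPushIntegrand α (n + 1)) (Ioo 0 1) := by
  induction n with
  | zero => exact betaPushIntegrand_one (α := α) ▸ integrableOn_zero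
  | succ n ih =>
    have hbeta := (integrableOn_rpow_mul_one_sub_rpow (u := 2 - α) (v := n + α)
      (by linarith) (by positivity)).const_mul ((n : ℝ) + 1)
    exact (ih.add hbeta).congr_fun (fun x hx => (betaPushIntegrand_add_two n hx).symm)
      measurableSet_Ioo

theorem betaPushRate_add_two_eq_add (n : ℕ) :
    betaPushRate α (n + 2) =
      betaPushRate α (n + 1) + Gamma (2 - α) * Gamma (n + α) / Gamma (n + 1) := by
  have hbeta := integrableOn_rpow_mul_one_sub_rpow (u := 2 - α) (v := n + α)
    (by linarith) (by positivity)
  rw [betaPushRate_eq_integral, setIntegral_congr_fun measurableSet_Ioo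
      fun x hx => betaPushIntegrand_add_two n hx,
    integral_add (integrableOn_betaPushIntegrand_add_one hα0 hα2 n) (hbeta.const_mul _),
    integral_const_mul, integral_rpow_mul_one_sub_rpow (by linarith) (by positivity),
    ← betaPushRate_eq_integral, show 2 - α + (n + α) = n + 1 + 1 by ring,
    Gamma_add_one (by positivity)]
  field_simp

theorem betaPushRate_add_two (n : ℕ) :
    betaPushRate α (n + 2) = Gamma (2 - α) * Gamma (n + 1 + α) / (α * Gamma (n + 1)) := by
  induction n with
  | zero =>
    rw [betaPushRate_add_two_eq_add hα0 hα2, betaPushRate_one, Nat.cast_zero, zero_add, zero_add,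
      zero_add, add_comm 1 α, Gamma_add_one hα0.ne', Gamma_one]
    field_simp
  | succ n ih =>
    have hΓα : Gamma (n + 1 + 1 + α) = (n + 1 + α) * Gamma (n + 1 + α) := by
      rw [add_right_comm _ 1 α, Gamma_add_one (by positivity)]
    have hΓ : Gamma (n + 1 + 1) = (n + 1) * Gamma (n + 1) := Gamma_add_one (by positivity)
    have hΓ_ne : Gamma (n + 1) ≠ 0 := (Gamma_pos_of_pos (by positivity)).ne'
    rw [betaPushRate_add_two_eq_add hα0 hα2, ih]
    push_cast
    rw [hΓα, hΓ]
    field_simp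

theorem betaPushRate_pos {j : ℕ} (hj : 2 ≤ j) : 0 < betaPushRate α j := by
  obtain ⟨n, rfl⟩ := Nat.exists_eq_add_of_le' hj
  rw [betaPushRate_add_two hα0 hα2]
  have hΓ2 := Gamma_pos_of_pos (show 0 < 2 - α by linarith)
  positivity

theorem tendsto_betaPushRate_div_rpow :
    Tendsto (fun j : ℕ => betaPushRate α j / (Gamma (2 - α) * (j : ℝ) ^ α / α))
      atTop (𝓝 1) := by
  rw [← tendsto_add_atTop_iff_nat 2]
  have hratio : Tendsto (fun n : ℕ => ((n : ℝ) / (n + 2)) ^ α) atTop (𝓝 1) := by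
    simpa using (tendsto_natCast_div_add_atTop (2 : ℝ)).rpow_const (Or.inr hα0.le)
  have hprod := (tendsto_Gamma_nat_add_one_add_div hα0).mul hratio
  rw [mul_one] at hprod
  refine hprod.congr' ?_
  filter_upwards [eventually_gt_atTop 0] with n hn
  have hΓ2 := Gamma_pos_of_pos (show 0 < 2 - α by linarith)
  have hΓn := Gamma_pos_of_pos (show (0 : ℝ) < n + 1 by positivity)
  have hn : (0 : ℝ) < n := by exact_mod_cast hn
  rw [betaPushRate_add_two hα0 hα2, div_rpow hn.le (by positivity)]
  push_cast
  field_simp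

end PushRate

/-- For `1 < α < 2`, the Beta coalescent pushing rates satisfy `r_j ~ Γ(2-α) j^α / α` as
`j → ∞`; moreover `r_j > 0` for `j ≥ 2` and `Σ_{j ≥ 2} 1/r_j < ∞`. -/
theorem betaPushRate_asymptotic_and_summable (α : ℝ) (hα1 : 1 < α) (hα2 : α < 2) :
    Tendsto
      (fun j : ℕ => betaPushRate α j / (Real.Gamma (2 - α) * (j : ℝ) ^ α / α))
      atTop (nhds 1) ∧
    (∀ j : ℕ, 2 ≤ j → 0 < betaPushRate α j) ∧
    Summable (fun j : ℕ => 1 / betaPushRate α (j + 2)) := by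
  have hα0 : 0 < α := by linarith
  have hlim := tendsto_betaPushRate_div_rpow hα0 hα2
  refine ⟨hlim, fun j hj => betaPushRate_pos hα0 hα2 hj, ?_⟩
  have hsum : Summable fun j : ℕ => (Gamma (2 - α) * (j : ℝ) ^ α / α)⁻¹ := by
    refine ((summable_nat_rpow_inv.mpr hα1).mul_left (α / Gamma (2 - α))).congr fun j => ?_
    rw [inv_div]
    ring
  have hinv := summable_of_isBigO_nat hsum (Asymptotics.isEquivalent_of_tendsto_one hlim).inv.isBigO
  simpa only [one_div, Pi.inv_apply] using (summable_nat_add_iff 2).mpr hinv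
end
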